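/- Let k be a field and B a finite-dimensional commutative local k-algebra equipped with a k-algebra homomorphism π : B → k. Let R ⊆ S be an extension of k-algebras such that S is a formally smooth R-algebra, and let ∂ : R → S ⊗_k B be a B-operator from R to S whose underlying homomorphism ∂₀ : R → S is the inclusion. Then ∂ extends to a B-operator on S: there exists a k-algebra homomorphism ∂' : S → S ⊗_k B such that (id_S ⊗ π) ∘ ∂' = id_S and ∂'|_R = ∂. -/

import Mathlib

/-!
The counit `S ⊗[k] B → S` is surjective and its kernel is generated by `ker π`, which is the
maximal ideal of the Artinian local ring `B` and hence nilpotent. Viewing `S ⊗[k] B` as an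
`R`-algebra through `δ`, the hypothesis `δ₀ = (R → S)` makes the counit `R`-linear, so formal
smoothness of `S` over `R` lifts `id_S` through it. The lift is a `B`-operator on `S`, and being
`R`-linear it restricts to `δ` on `R`.
-/

open TensorProduct

/-- The underlying homomorphism extractor `∂₀ = (id_T ⊗ π) ∘ ∂` of a `B`-operator:
the algebra map `T ⊗[k] B → T` induced by `π : B → k` and `T ⊗[k] k ≅ T`. -/
noncomputable def BOp.counit (k T B : Type*) [CommSemiring k] [CommSemiring T] [Algebra k T]
    [CommSemiring B] [Algebra k B] (π : B →ₐ[k] k) : T ⊗[k] B →ₐ[k] T :=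
  (Algebra.TensorProduct.rid k k T).toAlgHom.comp
    (Algebra.TensorProduct.map (AlgHom.id k T) π)

theorem IsLocalRing.isNilpotent_ker_of_isArtinianRing {A K : Type*} [CommRing A]
    [IsArtinianRing A] [IsLocalRing A] [Semiring K] [IsDomain K] (f : A →+* K) :
    IsNilpotent (RingHom.ker f) := by
  have := RingHom.ker_isPrime f
  rw [IsLocalRing.eq_maximalIdeal (IsArtinianRing.isMaximal_of_isPrime (RingHom.ker f)),
    ← IsLocalRing.jacobson_eq_maximalIdeal ⊥ bot_ne_top]
  exact IsArtinianRing.isNilpotent_jacobson_bot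

namespace BOp

section

variable {k T B : Type*} [CommSemiring k] [CommSemiring T] [Algebra k T]
    [CommSemiring B] [Algebra k B] (π : B →ₐ[k] k)

@[simp]
theorem counit_tmul (t : T) (b : B) : counit k T B π (t ⊗ₜ b) = π b • t := by
  simp [counit]

theorem counit_surjective : Function.Surjective (counit k T B π) :=
  fun t ↦ ⟨t ⊗ₜ 1, by rw [counit_tmul, map_one, one_smul]⟩

end

variable {k T B : Type*} [CommRing k] [CommRing T] [Algebra k T] [CommRing B] [Algebra k B]
    (π : B →ₐ[k] k)

theorem ker_counit :
    RingHom.ker (counit k T B π) =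
      (RingHom.ker π).map (Algebra.TensorProduct.includeRight : B →ₐ[k] T ⊗[k] B) := by
  rw [← Algebra.TensorProduct.lTensor_ker π (fun c ↦ ⟨algebraMap k B c, by simp⟩)]
  ext x
  simp only [RingHom.mem_ker, counit, AlgHom.comp_apply, AlgEquiv.coe_toAlgHom,
    EmbeddingLike.map_eq_zero_iff]

theorem isNilpotent_ker_counit (hπ : IsNilpotent (RingHom.ker π)) :
    IsNilpotent (RingHom.ker (counit k T B π)) := by
  rw [ker_counit]
  exact hπ.map
    (Ideal.mapHom (Algebra.TensorProduct.includeRight : B →ₐ[k] T ⊗[k] B))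

end BOp

theorem Algebra.FormallySmooth.exists_section_comp_eq {k R S A : Type*} [CommRing k]
    [CommRing R] [CommRing S] [CommRing A] [Algebra k R] [Algebra k S] [Algebra k A]
    [Algebra R S] [IsScalarTower k R S] [Algebra.FormallySmooth R S]
    (p : A →ₐ[k] S) (hp : Function.Surjective p) (hker : IsNilpotent (RingHom.ker p))
    (δ : R →ₐ[k] A) (hδ : p.comp δ = IsScalarTower.toAlgHom k R S) :
    ∃ σ : S →ₐ[k] A, p.comp σ = AlgHom.id k S ∧
      σ.comp (IsScalarTower.toAlgHom k R S) = δ := by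
  let _ : Algebra R A := δ.toAlgebra
  have : IsScalarTower k R A := .of_algebraMap_eq fun c ↦ (δ.commutes c).symm
  let pR : A →ₐ[R] S := { p with commutes' := fun r ↦ AlgHom.congr_fun hδ r }
  let σ := Algebra.FormallySmooth.liftOfSurjective (AlgHom.id R S) pR hp hker
  refine ⟨σ.restrictScalars k, ?_, ?_⟩
  · ext s
    exact Algebra.FormallySmooth.liftOfSurjective_apply _ pR hp hker s
  · ext r
    exact σ.commutes r

theorem BOperator.extends_of_formallySmooth.{u}
    (k B : Type*) [Field k] [CommRing B] [Algebra k B]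
    [FiniteDimensional k B] [IsLocalRing B] (π : B →ₐ[k] k)
    (R S : Type u) [CommRing R] [Algebra k R] [CommRing S] [Algebra k S]
    [Algebra R S] [IsScalarTower k R S]
    (hRS : Function.Injective (algebraMap R S))
    [Algebra.FormallySmooth R S]
    (δ : R →ₐ[k] S ⊗[k] B)
    (h0 : (BOp.counit k S B π).comp δ = IsScalarTower.toAlgHom k R S) :
    ∃ δ' : S →ₐ[k] S ⊗[k] B,
      (BOp.counit k S B π).comp δ' = AlgHom.id k S ∧
        δ'.comp (IsScalarTower.toAlgHom k R S) = δ := by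
  have : IsArtinianRing B := isArtinian_of_tower k inferInstance
  have hπ := IsLocalRing.isNilpotent_ker_of_isArtinianRing (π : B →+* k)
  exact Algebra.FormallySmooth.exists_section_comp_eq _ (BOp.counit_surjective π)
    (BOp.isNilpotent_ker_counit π hπ) δ h0
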